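/- Let φ : A → A^k be a substitution of constant length k ≥ 2. Suppose that for some n ≥ 1 and every unordered pair α of distinct letters of A, the length of (φ_s)^n(α) is at most k^n − 1 (i.e. φ^n(a) and φ^n(b) agree in at least one position, for every distinct a,b). Then φ has a coincidence: there exist m ∈ ℕ and an index 0 ≤ j < k^m such that the set {φ^m(a)_j : a ∈ A} is a singleton. -/

import Mathlib

variable {A : Type*}

/-- A substitution `φ : A → A^*` extended to finite words by concatenation. -/
def subExt (φ : A → List A) (w : List A) : List A := w.flatMap φ

/-- Composition of substitutions: `(φ ∘ τ)(a) = φ(τ(a))`. -/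
def subComp (φ τ : A → List A) : A → List A := fun a => subExt φ (τ a)

/-- The `n`-th power `φ^n` of a substitution. -/
def subPow (φ : A → List A) : ℕ → A → List A
  | 0 => fun a => [a]
  | n + 1 => subComp φ (subPow φ n)

/-- The discrepancy substitution `φ_s` of `φ`, defined on unordered pairs of letters:
`φ_s({a,b})` is the word, over the alphabet of unordered pairs, obtained by concatenating
the pairs `{φ(a)_i, φ(b)_i}` over those positions `i` where `φ(a)_i ≠ φ(b)_i`. -/
def discrep [DecidableEq A] (φ : A → List A) : Sym2 A → List (Sym2 A) :=
  Sym2.lift ⟨fun a b => ((φ a).zip (φ b)).filterMap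
      (fun p => if p.1 ≠ p.2 then some (Sym2.mk p.1 p.2) else none),
    by
      intro a b
      show List.filterMap _ ((φ a).zip (φ b)) = List.filterMap _ ((φ b).zip (φ a))
      rw [← List.zip_swap (φ a) (φ b), List.filterMap_map]
      congr 1
      funext p
      obtain ⟨x, y⟩ := p
      by_cases h : x = y
      · simp [h]
      · simp only [Function.comp_apply, Prod.swap_prod_mk]
        rw [if_pos (by simp [h]), if_pos (by simp [Ne.symm h])]
        exact congrArg some (Sym2.eq_swap ▸ rfl)⟩

/-!
The maps `a ↦ φ^m(a)_j`, the columns of `φ`, are closed under composition, because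
`φ^(m+n)(a)_(j k^n + i) = φ^n(φ^m(a)_j)_i`. The discrepancy substitution commutes with powers,
`(φ_s)^n {a,b} = (φ^n)_s {a,b}`, so the hypothesis says that every pair of distinct letters is
merged by some column of `φ^n`. Composing a column whose image has two distinct letters with a
column merging them strictly shrinks the image, so some column is eventually constant.
-/

theorem exists_subsingleton_range_of_comp_closed {α : Type*} [Finite α]
    (P : (α → α) → Prop) (hid : P id) (hcomp : ∀ f g, P f → P g → P (g ∘ f))
    (hmerge : ∀ x y, x ≠ y → ∃ g, P g ∧ g x = g y) :
    ∃ f, P f ∧ (Set.range f).Subsingleton := by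
  suffices ∀ f, P f → ∃ f', P f' ∧ (Set.range f').Subsingleton from this id hid
  intro f hf
  induction hN : (Set.range f).ncard using Nat.strong_induction_on generalizing f with
  | _ N ih =>
    by_cases hs : (Set.range f).Subsingleton
    · exact ⟨f, hf, hs⟩
    obtain ⟨_, ⟨a, rfl⟩, _, ⟨b, rfl⟩, hab⟩ := Set.not_subsingleton_iff.mp hs
    obtain ⟨g, hg, hgab⟩ := hmerge _ _ hab
    have hnotInj : ¬ Set.InjOn g (Set.range f) :=
      fun hinj => hab (hinj ⟨a, rfl⟩ ⟨b, rfl⟩ hgab)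
    refine ih _ ?_ (g ∘ f) (hcomp f g hf hg) rfl
    rw [← hN, Set.range_comp]
    exact (Set.ncard_image_le).lt_of_ne (mt Set.injOn_of_ncard_image_eq hnotInj)

namespace List

variable {α β : Type*}

theorem zip_flatMap_flatMap (f : α → List β) (L : ℕ) (hf : ∀ a, (f a).length = L) :
    ∀ u v : List α, u.length = v.length →
      (u.flatMap f).zip (v.flatMap f) = (u.zip v).flatMap fun p => (f p.1).zip (f p.2)
  | [], _, _ => by simp
  | _ :: _, [], huv => by simp at huv
  | x :: u, y :: v, huv => by
    simp only [flatMap_cons, zip_cons_cons]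
    rw [zip_append (by rw [hf x, hf y]),
      zip_flatMap_flatMap f L hf u v (by simpa using huv)]

theorem getD_flatMap_mul_add (f : α → List β) (L : ℕ) (hf : ∀ a, (f a).length = L) (c : α)
    (d : β) : ∀ (w : List α) (j i : ℕ), j < w.length → i < L →
      (w.flatMap f).getD (j * L + i) d = (f (w.getD j c)).getD i d
  | [], _, _, hj, _ => by simp at hj
  | x :: w, 0, i, _, hi => by
    rw [flatMap_cons, Nat.zero_mul, Nat.zero_add, getD_append _ _ _ _ (by rwa [hf x])]
    rfl
  | x :: w, j + 1, i, hj, hi => by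
    have hshift : j * L + i + (f x).length = (j + 1) * L + i := by rw [hf x]; ring
    rw [flatMap_cons, ← hshift, getD_append_right _ _ _ _ (by omega), Nat.add_sub_cancel,
      getD_flatMap_mul_add f L hf c d w j i (by simpa using hj) hi]
    rfl

end List

theorem length_subExt (φ : A → List A) (k : ℕ) (hφ : ∀ a, (φ a).length = k) (w : List A) :
    (subExt φ w).length = w.length * k := by
  simp [subExt, hφ]

theorem length_subPow (φ : A → List A) (k : ℕ) (hφ : ∀ a, (φ a).length = k) (m : ℕ) (a : A) :
    (subPow φ m a).length = k ^ m := by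
  induction m with
  | zero => rfl
  | succ m ih => exact (length_subExt φ k hφ _).trans (by rw [ih, pow_succ])

theorem subPow_add (φ : A → List A) (m n : ℕ) (a : A) :
    subPow φ (m + n) a = subExt (subPow φ n) (subPow φ m a) := by
  induction n with
  | zero => simp [subPow, subExt]
  | succ n ih =>
    change subExt φ (subPow φ (m + n) a) = _
    rw [ih]
    exact List.flatMap_assoc

section Discrepancy

variable [DecidableEq A]

def discrepLetter (p : A × A) : Option (Sym2 A) :=
  if p.1 ≠ p.2 then some (Sym2.mk p.1 p.2) else none

theorem discrep_mk (ψ : A → List A) (a b : A) :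
    discrep ψ (Sym2.mk a b) = ((ψ a).zip (ψ b)).filterMap discrepLetter := rfl

theorem discrep_diag (ψ : A → List A) (a : A) : discrep ψ (Sym2.mk a a) = [] := by
  simp [discrep_mk, List.zip_eq_zipWith, List.zipWith_self, discrepLetter]

theorem flatMap_discrepLetter (φ : A → List A) (p : A × A) :
    (discrepLetter p).toList.flatMap (discrep φ) = discrep φ (Sym2.mk p.1 p.2) := by
  obtain ⟨x, y⟩ := p
  by_cases hxy : x = y
  · subst hxy
    simp [discrepLetter, discrep_diag]
  · simp [discrepLetter, hxy]

theorem discrep_subComp (φ ψ : A → List A) (k : ℕ) (hφ : ∀ a, (φ a).length = k) (a b : A)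
    (hab : (ψ a).length = (ψ b).length) :
    discrep (subComp φ ψ) (Sym2.mk a b) = subExt (discrep φ) (discrep ψ (Sym2.mk a b)) := by
  simp only [discrep_mk, subComp, subExt]
  rw [List.zip_flatMap_flatMap φ k hφ _ _ hab, List.filterMap_flatMap,
    List.filterMap_eq_flatMap_toList, List.flatMap_assoc]
  exact List.flatMap_congr fun p _ => (flatMap_discrepLetter φ p).symm

theorem subPow_discrep (φ : A → List A) (k : ℕ) (hφ : ∀ a, (φ a).length = k) (n : ℕ) {a b : A}
    (hab : a ≠ b) :
    subPow (discrep φ) n (Sym2.mk a b) = discrep (subPow φ n) (Sym2.mk a b) := by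
  induction n with
  | zero => simp [subPow, discrep_mk, discrepLetter, hab]
  | succ n ih =>
    change subExt (discrep φ) (subPow (discrep φ) n _) = _
    rw [ih, ← discrep_subComp φ _ k hφ a b (by rw [length_subPow φ k hφ, length_subPow φ k hφ])]
    rfl

theorem exists_getD_eq_of_length_discrep_lt (ψ : A → List A) (L : ℕ) {a b : A}
    (ha : (ψ a).length = L) (hb : (ψ b).length = L)
    (hlt : (discrep ψ (Sym2.mk a b)).length < L) (c : A) :
    ∃ i < L, (ψ a).getD i c = (ψ b).getD i c := by
  have hzip : ((ψ a).zip (ψ b)).length = L := by simp [ha, hb]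
  rw [discrep_mk, ← hzip, List.length_filterMap_lt_length_iff_exists] at hlt
  obtain ⟨p, hp, hpp⟩ := hlt
  obtain ⟨i, hi, rfl⟩ := List.mem_iff_getElem.mp hp
  have hia : i < (ψ a).length := by omega
  have hib : i < (ψ b).length := by omega
  have hagree : (ψ a)[i] = (ψ b)[i] := by simpa [discrepLetter] using hpp
  exact ⟨i, hzip ▸ hi, by rw [List.getD_eq_getElem _ _ hia, List.getD_eq_getElem _ _ hib, hagree]⟩

end Discrepancy

section Columns

/-- The default letter `c` only matters for `j` out of range, see `column_eq_getD`. -/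
def column (φ : A → List A) (c : A) (m j : ℕ) (a : A) : A := (subPow φ m a).getD j c

def IsColumn (φ : A → List A) (k : ℕ) (c : A) (f : A → A) : Prop :=
  ∃ m j, j < k ^ m ∧ f = column φ c m j

variable (φ : A → List A) {k : ℕ} (c : A)

theorem column_eq_getD (hφ : ∀ a, (φ a).length = k) {m j : ℕ} (hj : j < k ^ m) (c' a : A) :
    column φ c m j a = (subPow φ m a).getD j c' := by
  have hlen : j < (subPow φ m a).length := by rwa [length_subPow φ k hφ]
  rw [column, List.getD_eq_getElem _ _ hlen, List.getD_eq_getElem _ _ hlen]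

theorem column_comp_column (hφ : ∀ a, (φ a).length = k) {m j n i : ℕ} (hj : j < k ^ m)
    (hi : i < k ^ n) :
    column φ c n i ∘ column φ c m j = column φ c (m + n) (j * k ^ n + i) := by
  funext a
  rw [Function.comp_apply, column, column, column, subPow_add]
  refine (List.getD_flatMap_mul_add _ _ (length_subPow φ k hφ n) c c _ j i ?_ hi).symm
  rwa [length_subPow φ k hφ]

theorem isColumn_id : IsColumn φ k c id := ⟨0, 0, Nat.one_pos, rfl⟩

theorem IsColumn.comp (hφ : ∀ a, (φ a).length = k) {f g : A → A} :
    IsColumn φ k c f → IsColumn φ k c g → IsColumn φ k c (g ∘ f)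
  | ⟨m, j, hj, hf⟩, ⟨n, i, hi, hg⟩ => by
    refine ⟨m + n, j * k ^ n + i, ?_, by rw [hf, hg, column_comp_column φ c hφ hj hi]⟩
    calc j * k ^ n + i < (j + 1) * k ^ n := by rw [add_one_mul]; omega
      _ ≤ k ^ m * k ^ n := Nat.mul_le_mul_right _ hj
      _ = k ^ (m + n) := (pow_add k m n).symm

theorem exists_isColumn_eq_of_ne [DecidableEq A] (hk : 0 < k) (hφ : ∀ a, (φ a).length = k)
    {n : ℕ} {x y : A} (hxy : x ≠ y)
    (hlen : (subPow (discrep φ) n (Sym2.mk x y)).length ≤ k ^ n - 1) :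
    ∃ g, IsColumn φ k c g ∧ g x = g y := by
  have hlt : (discrep (subPow φ n) (Sym2.mk x y)).length < k ^ n := by
    rw [subPow_discrep φ k hφ n hxy] at hlen
    have := Nat.pow_pos (n := n) hk
    omega
  obtain ⟨i, hi, hagree⟩ := exists_getD_eq_of_length_discrep_lt _ _ (length_subPow φ k hφ n x)
    (length_subPow φ k hφ n y) hlt c
  exact ⟨column φ c n i, ⟨n, i, hi, rfl⟩, hagree⟩

end Columns

theorem stmt3_general [DecidableEq A] [Fintype A] [Nonempty A] (k : ℕ) (hk : 2 ≤ k)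
    (φ : A → List A) (hφ : ∀ a, (φ a).length = k)
    (n : ℕ)
    (h : ∀ a b : A, a ≠ b → (subPow (discrep φ) n (Sym2.mk a b)).length ≤ k ^ n - 1) :
    ∃ m : ℕ, ∃ j : ℕ, j < k ^ m ∧ ∃ c : A, ∀ a : A, (subPow φ m a).getD j c = c := by
  obtain ⟨c⟩ := ‹Nonempty A›
  obtain ⟨f, ⟨m, j, hj, rfl⟩, hconst⟩ := exists_subsingleton_range_of_comp_closed
    (IsColumn φ k c) (isColumn_id φ c) (fun _ _ => IsColumn.comp φ c hφ)
    (fun x y hxy => exists_isColumn_eq_of_ne φ c (by omega) hφ hxy (h x y hxy))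
  refine ⟨m, j, hj, column φ c m j c, fun a => ?_⟩
  rw [← column_eq_getD φ c hφ hj]
  exact hconst ⟨a, rfl⟩ ⟨c, rfl⟩

/-- Let `φ` be a substitution of constant length `k ≥ 2` over a finite
alphabet. If for some `n ≥ 1` every unordered pair `{a,b}` of distinct letters satisfies
`|(φ_s)^n({a,b})| ≤ k^n − 1`, then `φ` has a coincidence: there are `m ∈ ℕ` and
`0 ≤ j < k^m` such that the column set `{φ^m(a)_j : a ∈ A}` is a singleton. -/
theorem stmt3 [DecidableEq A] [Fintype A] [Nonempty A] (k : ℕ) (hk : 2 ≤ k)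
    (φ : A → List A) (hφ : ∀ a, (φ a).length = k)
    (n : ℕ) (hn : 1 ≤ n)
    (h : ∀ a b : A, a ≠ b → (subPow (discrep φ) n (Sym2.mk a b)).length ≤ k ^ n - 1) :
    ∃ m : ℕ, ∃ j : ℕ, j < k ^ m ∧ ∃ c : A, ∀ a : A, (subPow φ m a).getD j c = c :=
  stmt3_general k hk φ hφ n h
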